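/- Consider a single-head attention output u'(D) = Σ_{j=1}^n a_j W V_j, where a_j = softmax(v^T W_q V_1, …, v^T W_q V_n)_j, the inputs satisfy ‖V_j‖ ≤ K, ‖v‖ ≤ K, and ‖W‖, ‖W_q‖ ≤ 1 (operator norms). If D and D̃ differ only in the n-th sample V_n (with ‖Ṽ_n‖ ≤ K), then ‖u'(D) − u'(D̃)‖ ≤ C(K)/n for a constant C(K) depending only on K (e.g., C(K) = 8 e^{4K²} K). -/

import Mathlib

open RealInnerProductSpace

noncomputable section

/-- Single-head attention output `u'(V) = Σ_j a_j W V_j` with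
`a_j = softmax(⟪v, W_q V_1⟫, …, ⟪v, W_q V_n⟫)_j`. -/
def attention {d n : ℕ} (W Wq : EuclideanSpace ℝ (Fin d) →L[ℝ] EuclideanSpace ℝ (Fin d))
    (v : EuclideanSpace ℝ (Fin d)) (V : Fin n → EuclideanSpace ℝ (Fin d)) :
    EuclideanSpace ℝ (Fin d) :=
  ∑ j, (Real.exp ⟪v, Wq (V j)⟫ / ∑ i, Real.exp ⟪v, Wq (V i)⟫) • W (V j)

/-!
Both outputs are softmax-weighted averages of the vectors `W V_j`, all of norm at most `K`.
The scores are bounded by `K²`, so each softmax weight is at most `e^{2K²}/n`. Changing one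
score moves the normaliser `Σ exp` by at most `e^{K²}`, while the normaliser stays at least
`n e^{-K²}`; hence the weights move by at most `2 e^{2K²}/n` in `ℓ¹`. The triangle inequality
bounds the change of output by `K` times that `ℓ¹` distance plus `2K` times the weight of the
changed sample, i.e. by `4 e^{2K²} K / n`.
-/

open Finset Real

def softmax {ι : Type*} [Fintype ι] (s : ι → ℝ) (j : ι) : ℝ :=
  exp (s j) / ∑ i, exp (s i)

section Softmax

variable {ι : Type*} [Fintype ι] {s s' : ι → ℝ} {B : ℝ}

lemma softmax_nonneg (s : ι → ℝ) (j : ι) : 0 ≤ softmax s j := by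
  unfold softmax; positivity

lemma sum_softmax [Nonempty ι] (s : ι → ℝ) : ∑ j, softmax s j = 1 := by
  simp only [softmax, ← sum_div]
  exact div_self (sum_pos (fun i _ => exp_pos _) univ_nonempty).ne'

lemma card_mul_exp_neg_le_sum_exp (hs : ∀ i, |s i| ≤ B) :
    Fintype.card ι * exp (-B) ≤ ∑ i, exp (s i) := by
  simpa using sum_le_sum fun i (_ : i ∈ univ) => exp_le_exp.2 (neg_le_of_abs_le (hs i))

lemma div_card_mul_exp_neg_eq (B : ℝ) :
    exp B / (Fintype.card ι * exp (-B)) = exp (2 * B) / Fintype.card ι := by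
  rw [exp_neg, two_mul, exp_add]; field_simp

lemma softmax_le_exp_two_mul_div_card (hs : ∀ i, |s i| ≤ B) (j : ι) :
    softmax s j ≤ exp (2 * B) / Fintype.card ι := by
  have : Nonempty ι := ⟨j⟩
  rw [← div_card_mul_exp_neg_eq]
  exact div_le_div₀ (exp_pos _).le (exp_le_exp.2 (le_of_abs_le (hs j))) (by positivity)
    (card_mul_exp_neg_le_sum_exp hs)

lemma softmax_sub_softmax_of_eq [Nonempty ι] {j : ι} (h : s j = s' j) :
    softmax s j - softmax s' j =
      softmax s j * ((∑ i, exp (s' i) - ∑ i, exp (s i)) / ∑ i, exp (s' i)) := by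
  have hS : 0 < ∑ i, exp (s i) := sum_pos (fun i _ => exp_pos _) univ_nonempty
  have hS' : 0 < ∑ i, exp (s' i) := sum_pos (fun i _ => exp_pos _) univ_nonempty
  simp only [softmax, h]
  field_simp

lemma sum_exp_sub_sum_exp_of_eq_off {i₀ : ι} (h : ∀ j ≠ i₀, s j = s' j) :
    ∑ i, exp (s i) - ∑ i, exp (s' i) = exp (s i₀) - exp (s' i₀) := by
  rw [← sum_sub_distrib, sum_eq_single i₀ (fun j _ hj => by rw [h j hj, sub_self])
    (fun h => absurd (mem_univ i₀) h)]

lemma sum_abs_softmax_sub_softmax_le [DecidableEq ι] (hs : ∀ i, |s i| ≤ B)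
    (hs' : ∀ i, |s' i| ≤ B) {i₀ : ι} (h : ∀ j ≠ i₀, s j = s' j) :
    ∑ j, |softmax s j - softmax s' j| ≤ 2 * exp (2 * B) / Fintype.card ι := by
  have : Nonempty ι := ⟨i₀⟩
  set S := ∑ i, exp (s i)
  set S' := ∑ i, exp (s' i)
  have hS' : 0 < S' := sum_pos (fun i _ => exp_pos _) univ_nonempty
  have hchanged : |softmax s i₀ - softmax s' i₀| ≤ exp (2 * B) / Fintype.card ι :=
    abs_sub_le_of_nonneg_of_le (softmax_nonneg s i₀) (softmax_le_exp_two_mul_div_card hs i₀)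
      (softmax_nonneg s' i₀) (softmax_le_exp_two_mul_div_card hs' i₀)
  have hsum : |S' - S| ≤ exp B := by
    rw [abs_sub_comm, sum_exp_sub_sum_exp_of_eq_off h]
    exact abs_sub_le_of_nonneg_of_le (exp_pos _).le (exp_le_exp.2 (le_of_abs_le (hs i₀)))
      (exp_pos _).le (exp_le_exp.2 (le_of_abs_le (hs' i₀)))
  -- off `i₀` the two softmaxes differ only through their normalisations
  have hrest : ∑ j ∈ {i₀}ᶜ, |softmax s j - softmax s' j| ≤ exp (2 * B) / Fintype.card ι :=
    calc ∑ j ∈ {i₀}ᶜ, |softmax s j - softmax s' j|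
        = ∑ j ∈ {i₀}ᶜ, softmax s j * (|S' - S| / S') := by
          refine sum_congr rfl fun j hj => ?_
          rw [softmax_sub_softmax_of_eq (h j (by simpa using hj)), abs_mul, abs_div,
            abs_of_nonneg (softmax_nonneg s j), abs_of_pos hS']
      _ ≤ ∑ j, softmax s j * (|S' - S| / S') :=
          sum_le_sum_of_subset_of_nonneg (subset_univ _) fun j _ _ =>
            mul_nonneg (softmax_nonneg s j) (by positivity)
      _ = |S' - S| / S' := by rw [← sum_mul, sum_softmax, one_mul]
      _ ≤ exp B / (Fintype.card ι * exp (-B)) :=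
          div_le_div₀ (exp_pos _).le hsum (by positivity) (card_mul_exp_neg_le_sum_exp hs')
      _ = exp (2 * B) / Fintype.card ι := div_card_mul_exp_neg_eq B
  calc ∑ j, |softmax s j - softmax s' j|
      = |softmax s i₀ - softmax s' i₀| + ∑ j ∈ {i₀}ᶜ, |softmax s j - softmax s' j| :=
        Fintype.sum_eq_add_sum_compl i₀ _
    _ ≤ 2 * exp (2 * B) / Fintype.card ι := by
        rw [two_mul, add_div]; exact add_le_add hchanged hrest

end Softmax

section WeightedSum

variable {ι E : Type*} [Fintype ι] [NormedAddCommGroup E] [NormedSpace ℝ E]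

lemma norm_sum_smul_sub_sum_smul_le {a a' : ι → ℝ} {x x' : ι → E} {K : ℝ} {i₀ : ι}
    (hx : ∀ j, ‖x j‖ ≤ K) (hx' : ‖x' i₀‖ ≤ K) (h : ∀ j ≠ i₀, x j = x' j) :
    ‖∑ j, a j • x j - ∑ j, a' j • x' j‖
      ≤ K * ∑ j, |a j - a' j| + 2 * K * |a' i₀| := by
  have hsplit : ∑ j, a' j • x' j = ∑ j, a' j • x j + a' i₀ • (x' i₀ - x i₀) := by
    rw [← sub_eq_iff_eq_add', ← sum_sub_distrib, smul_sub,
      sum_eq_single i₀ (fun j _ hj => by rw [h j hj, sub_self])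
        (fun h => absurd (mem_univ i₀) h)]
  calc ‖∑ j, a j • x j - ∑ j, a' j • x' j‖
      = ‖∑ j, (a j - a' j) • x j - a' i₀ • (x' i₀ - x i₀)‖ := by
        simp only [hsplit, sub_smul, sum_sub_distrib, sub_add_eq_sub_sub]
    _ ≤ ∑ j, |a j - a' j| * ‖x j‖ + |a' i₀| * ‖x' i₀ - x i₀‖ := by
        refine (norm_sub_le _ _).trans (add_le_add ((norm_sum_le _ _).trans_eq ?_) ?_)
        · simp only [norm_smul, Real.norm_eq_abs]
        · rw [norm_smul, Real.norm_eq_abs]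
    _ ≤ ∑ j, |a j - a' j| * K + |a' i₀| * (K + K) := by
        gcongr with j
        · exact hx j
        · exact (norm_sub_le _ _).trans (add_le_add hx' (hx i₀))
    _ = K * ∑ j, |a j - a' j| + 2 * K * |a' i₀| := by rw [← sum_mul]; ring

end WeightedSum

section OperatorNorm

variable {E F : Type*} [NormedAddCommGroup E] [NormedSpace ℝ E] [NormedAddCommGroup F]

lemma norm_apply_le_of_opNorm_le_one [NormedSpace ℝ F] {T : E →L[ℝ] F} (hT : ‖T‖ ≤ 1)
    {u : E} {K : ℝ} (hu : ‖u‖ ≤ K) : ‖T u‖ ≤ K :=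
  (T.le_of_opNorm_le hT u).trans (by rw [one_mul]; exact hu)

lemma abs_inner_apply_le_sq [InnerProductSpace ℝ F] {T : E →L[ℝ] F} (hT : ‖T‖ ≤ 1)
    {v : F} {u : E} {K : ℝ} (hv : ‖v‖ ≤ K) (hu : ‖u‖ ≤ K) : |⟪v, T u⟫| ≤ K ^ 2 := by
  calc |⟪v, T u⟫| ≤ ‖v‖ * ‖T u‖ := abs_real_inner_le_norm _ _
    _ ≤ K * K := mul_le_mul hv (norm_apply_le_of_opNorm_le_one hT hu) (norm_nonneg _)
        ((norm_nonneg v).trans hv)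
    _ = K ^ 2 := (sq K).symm

end OperatorNorm

theorem attention_bounded_difference_general {d n : ℕ} (K : ℝ)
    (W Wq : EuclideanSpace ℝ (Fin d) →L[ℝ] EuclideanSpace ℝ (Fin d))
    (hW : ‖W‖ ≤ 1) (hWq : ‖Wq‖ ≤ 1)
    (v : EuclideanSpace ℝ (Fin d)) (hv : ‖v‖ ≤ K)
    (V V' : Fin n → EuclideanSpace ℝ (Fin d))
    (hV : ∀ j, ‖V j‖ ≤ K) (hV' : ∀ j, ‖V' j‖ ≤ K)
    (i₀ : Fin n) (hdiff : ∀ j, j ≠ i₀ → V j = V' j) :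
    ‖attention W Wq v V - attention W Wq v V'‖
      ≤ 8 * Real.exp (4 * K ^ 2) * K / n := by
  have hK : 0 ≤ K := (norm_nonneg v).trans hv
  set s : Fin n → ℝ := fun i => ⟪v, Wq (V i)⟫
  set s' : Fin n → ℝ := fun i => ⟪v, Wq (V' i)⟫
  have hs : ∀ j, |s j| ≤ K ^ 2 := fun j => abs_inner_apply_le_sq hWq hv (hV j)
  have hs' : ∀ j, |s' j| ≤ K ^ 2 := fun j => abs_inner_apply_le_sq hWq hv (hV' j)
  have hweights := sum_abs_softmax_sub_softmax_le hs hs' (i₀ := i₀)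
    (fun j hj => by simp only [s, s', hdiff j hj])
  have hchanged := softmax_le_exp_two_mul_div_card hs' i₀
  rw [Fintype.card_fin] at hweights hchanged
  calc ‖attention W Wq v V - attention W Wq v V'‖
      ≤ K * ∑ j, |softmax s j - softmax s' j| + 2 * K * |softmax s' i₀| :=
        norm_sum_smul_sub_sum_smul_le (fun j => norm_apply_le_of_opNorm_le_one hW (hV j))
          (norm_apply_le_of_opNorm_le_one hW (hV' i₀))
          (fun j hj => by rw [hdiff j hj])
    _ ≤ K * (2 * exp (2 * K ^ 2) / n) + 2 * K * (exp (2 * K ^ 2) / n) := by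
        rw [abs_of_nonneg (softmax_nonneg s' i₀)]
        gcongr
    _ = 4 * exp (2 * K ^ 2) * K / n := by ring
    _ ≤ 8 * exp (4 * K ^ 2) * K / n := by
        gcongr
        · norm_num
        · linarith [sq_nonneg K]

/-- Changing one sample of bounded norm changes the single-head attention
output by at most `8 e^{4K²} K / n`. -/
theorem attention_bounded_difference {d n : ℕ} (hn : 0 < n) (K : ℝ) (hK : 0 ≤ K)
    (W Wq : EuclideanSpace ℝ (Fin d) →L[ℝ] EuclideanSpace ℝ (Fin d))
    (hW : ‖W‖ ≤ 1) (hWq : ‖Wq‖ ≤ 1)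
    (v : EuclideanSpace ℝ (Fin d)) (hv : ‖v‖ ≤ K)
    (V V' : Fin n → EuclideanSpace ℝ (Fin d))
    (hV : ∀ j, ‖V j‖ ≤ K) (hV' : ∀ j, ‖V' j‖ ≤ K)
    (i₀ : Fin n) (hdiff : ∀ j, j ≠ i₀ → V j = V' j) :
    ‖attention W Wq v V - attention W Wq v V'‖
      ≤ 8 * Real.exp (4 * K ^ 2) * K / n :=
  attention_bounded_difference_general K W Wq hW hWq v hv V V' hV hV' i₀ hdiff

end
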